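/- arXiv:1312.5108 — 4 statements merged into one kernel-verified Lean document; each statement's English description precedes it below -/
import Mathlib

section
/- Let K be a field of characteristic 3. A polynomial g ∈ K[T] satisfies g(T+1) = g(T) if and only if g is a polynomial in T³ − T. -/
open Polynomial

/-! If `g(T + 1) = g(T)` then `g - g(0)` vanishes on the prime field `𝔽_p ⊆ K`, so it is divisible
by `T ^ p - T = ∏_{a ∈ 𝔽_p} (T - a)`. Since `T ^ p - T` is itself shift invariant, so is the
quotient, which has smaller degree; induct. -/

namespace Polynomial

theorem X_pow_sub_X_comp_X_add_one {R : Type*} [CommRing R] (p : ℕ) [Fact p.Prime] [CharP R p] :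
    ((X : R[X]) ^ p - X).comp (X + 1) = X ^ p - X := by
  rw [sub_comp, pow_comp, X_comp, add_pow_char, one_pow]
  ring

theorem eval_natCast_eq_eval_zero_of_comp_X_add_one_eq {R : Type*} [CommSemiring R] {g : R[X]}
    (hg : g.comp (X + 1) = g) (n : ℕ) : g.eval (n : R) = g.eval 0 := by
  induction n with
  | zero => rw [Nat.cast_zero]
  | succ n ih =>
    have := congrArg (eval (n : R)) hg
    rwa [eval_comp, eval_add, eval_X, eval_one, ih, ← Nat.cast_succ] at this

section Field

variable {K : Type*} [Field K] (p : ℕ) [hp : Fact p.Prime] [CharP K p]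

theorem X_pow_sub_X_dvd_of_eval_natCast_eq_zero {f : K[X]} (hf : ∀ n : ℕ, f.eval (n : K) = 0) :
    (X ^ p - X : K[X]) ∣ f := by
  have hmonic : (X ^ p - X : K[X]).Monic :=
    monic_X_pow_sub (by rw [degree_X]; exact_mod_cast hp.out.one_lt)
  rw [← modByMonic_eq_zero_iff_dvd hmonic]
  let φ := ZMod.castHom (dvd_refl p) K
  apply eq_zero_of_natDegree_lt_card_of_eval_eq_zero _ φ.injective
  · intro a
    obtain ⟨n, rfl⟩ := ZMod.natCast_zmod_surjective a
    have hfrob : (n : K) ^ p = n := by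
      rw [← map_natCast φ, ← map_pow, ZMod.pow_card]
    rw [map_natCast, modByMonic_eq_sub_mul_div, eval_sub, eval_mul, hf, eval_sub,
      eval_pow, eval_X, hfrob, sub_self, zero_mul, sub_zero]
  · have hdeg := FiniteField.X_pow_card_sub_X_natDegree_eq K hp.out.one_lt
    have hne_one : (X ^ p - X : K[X]) ≠ 1 := fun h ↦
      hp.out.ne_zero (by rw [← hdeg, h, natDegree_one])
    rw [ZMod.card]
    exact (natDegree_modByMonic_lt _ hmonic hne_one).trans_eq hdeg

theorem exists_eq_comp_X_pow_sub_X_of_comp_X_add_one_eq {g : K[X]} (hg : g.comp (X + 1) = g) :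
    ∃ h : K[X], g = h.comp (X ^ p - X) := by
  induction hn : g.natDegree using Nat.strong_induction_on generalizing g with
  | _ n ih =>
  obtain ⟨q, hq⟩ : (X ^ p - X : K[X]) ∣ g - C (g.eval 0) :=
    X_pow_sub_X_dvd_of_eval_natCast_eq_zero p fun n ↦ by
      rw [eval_sub, eval_C, eval_natCast_eq_eval_zero_of_comp_X_add_one_eq hg, sub_self]
  have hne : (X ^ p - X : K[X]) ≠ 0 := FiniteField.X_pow_card_sub_X_ne_zero K hp.out.one_lt
  have hq_inv : q.comp (X + 1) = q := by
    refine mul_left_cancel₀ hne ?_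
    calc (X ^ p - X) * q.comp (X + 1) = ((X ^ p - X) * q).comp (X + 1) := by
          rw [mul_comp, X_pow_sub_X_comp_X_add_one]
      _ = (X ^ p - X) * q := by rw [← hq, sub_comp, C_comp, hg]
  by_cases hq0 : q = 0
  · refine ⟨C (g.eval 0), ?_⟩
    rw [C_comp, ← sub_eq_zero, hq, hq0, mul_zero]
  have hdeg : q.natDegree < n := by
    have := congrArg natDegree hq
    rw [natDegree_sub_C, natDegree_mul hne hq0,
      FiniteField.X_pow_card_sub_X_natDegree_eq K hp.out.one_lt] at this
    have := hp.out.pos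
    omega
  obtain ⟨h, rfl⟩ := ih _ hdeg hq_inv rfl
  refine ⟨C (g.eval 0) + X * h, ?_⟩
  rw [add_comp, mul_comp, X_comp, C_comp, ← hq, add_sub_cancel]

theorem comp_X_add_one_eq_self_iff_exists_eq_comp_X_pow_sub_X (g : K[X]) :
    g.comp (X + 1) = g ↔ ∃ h : K[X], g = h.comp (X ^ p - X) :=
  ⟨exists_eq_comp_X_pow_sub_X_of_comp_X_add_one_eq p, by
    rintro ⟨h, rfl⟩
    rw [comp_assoc, X_pow_sub_X_comp_X_add_one]⟩

end Field

end Polynomial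

theorem stmt_10 (K : Type*) [Field K] [CharP K 3] (g : K[X]) :
    g.comp (X + 1) = g ↔ ∃ h : K[X], g = h.comp (X ^ 3 - X) :=
  comp_X_add_one_eq_self_iff_exists_eq_comp_X_pow_sub_X 3 g
end

section
/- Let K be a field of characteristic 3. The maps g: (X,Y,Z) ↦ (X+1, Y, Z+Y) and h: (X,Y,Z) ↦ (X, Y−1, Z+X) preserve the affine variety in A³ defined by (X³−X)(Y³−Y) − 1 = 0 and Z³ − Z + X³Y − XY³ = 0, and the group of transformations of A³ generated by g and h is non-abelian of order 27 and exponent 3 (hence isomorphic to UT(3,3)). -/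
/-- The unipotent upper-triangular `3 × 3` matrix with strictly-upper entries `a b c`. -/
def UTMat (a b c : ZMod 3) : Matrix (Fin 3) (Fin 3) (ZMod 3) :=
  !![1, a, b; 0, 1, c; 0, 0, 1]

/-- `UT(3,3)`: the group of upper-triangular unipotent `3 × 3` matrices over `𝔽₃`. -/
def UT33 : Type :=
  { M : Matrix (Fin 3) (Fin 3) (ZMod 3) // ∃ a b c : ZMod 3, M = UTMat a b c }

lemma UTMat_mul (a b c a' b' c' : ZMod 3) :
    UTMat a b c * UTMat a' b' c' = UTMat (a + a') (b + (b' + a * c')) (c + c') := by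
  simp only [UTMat, Matrix.mul_fin_three]
  congr 1 <;> ring

lemma UTMat_one : UTMat 0 0 0 = 1 := by
  simp [UTMat, Matrix.one_fin_three]

instance : Mul UT33 :=
  ⟨fun M N => ⟨M.1 * N.1, by
    obtain ⟨a, b, c, hM⟩ := M.2
    obtain ⟨a', b', c', hN⟩ := N.2
    exact ⟨a + a', b + (b' + a * c'), c + c', by rw [hM, hN, UTMat_mul]⟩⟩⟩

instance : One UT33 := ⟨⟨1, 0, 0, 0, UTMat_one.symm⟩⟩

instance : Inv UT33 :=
  ⟨fun M => ⟨UTMat (-(M.1 0 1)) (M.1 0 1 * M.1 1 2 - M.1 0 2) (-(M.1 1 2)), _, _, _, rfl⟩⟩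

instance : Group UT33 where
  mul_assoc a b c := Subtype.ext (mul_assoc a.1 b.1 c.1)
  one_mul a := Subtype.ext (one_mul a.1)
  mul_one a := Subtype.ext (mul_one a.1)
  inv_mul_cancel M := by
    obtain ⟨Mv, hM⟩ := M
    obtain ⟨a, b, c, rfl⟩ := hM
    refine Subtype.ext ?_
    show UTMat (-(UTMat a b c 0 1)) (UTMat a b c 0 1 * UTMat a b c 1 2 - UTMat a b c 0 2)
        (-(UTMat a b c 1 2)) * UTMat a b c = 1
    have h01 : UTMat a b c 0 1 = a := by simp [UTMat]
    have h12 : UTMat a b c 1 2 = c := by simp [UTMat]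
    have h02 : UTMat a b c 0 2 = b := by simp [UTMat]
    rw [h01, h12, h02, UTMat_mul, ← UTMat_one]
    congr 1 <;> ring

/-- The affine variety in `𝔸³` cut out by `(X³-X)(Y³-Y) - 1 = 0` and
`Z³ - Z + X³Y - XY³ = 0`. -/
def curveV (K : Type*) [Field K] : Set (K × K × K) :=
  {P | (P.1 ^ 3 - P.1) * (P.2.1 ^ 3 - P.2.1) - 1 = 0 ∧
       P.2.2 ^ 3 - P.2.2 + P.1 ^ 3 * P.2.1 - P.1 * P.2.1 ^ 3 = 0}

/-- `g : (X,Y,Z) ↦ (X+1, Y, Z+Y)` as a permutation of `𝔸³`. -/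
def gPerm (K : Type*) [Field K] : Equiv.Perm (K × K × K) where
  toFun P := (P.1 + 1, P.2.1, P.2.2 + P.2.1)
  invFun P := (P.1 - 1, P.2.1, P.2.2 - P.2.1)
  left_inv P := by obtain ⟨x, y, z⟩ := P; simp only [Prod.mk.injEq]
                   exact ⟨by ring, trivial, by ring⟩
  right_inv P := by obtain ⟨x, y, z⟩ := P; simp only [Prod.mk.injEq]
                    exact ⟨by ring, trivial, by ring⟩

/-- `h : (X,Y,Z) ↦ (X, Y-1, Z+X)` as a permutation of `𝔸³`. -/
def hPerm (K : Type*) [Field K] : Equiv.Perm (K × K × K) where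
  toFun P := (P.1, P.2.1 - 1, P.2.2 + P.1)
  invFun P := (P.1, P.2.1 + 1, P.2.2 - P.1)
  left_inv P := by obtain ⟨x, y, z⟩ := P; simp only [Prod.mk.injEq]
                   exact ⟨trivial, by ring, by ring⟩
  right_inv P := by obtain ⟨x, y, z⟩ := P; simp only [Prod.mk.injEq]
                    exact ⟨trivial, by ring, by ring⟩


/-!
In characteristic 3 the Artin–Schreier map `℘ x = x³ - x` is additive and vanishes on `𝔽₃`, and
the second equation reads `℘ Z + ℘ X · Y - X · ℘ Y = 0`; this makes both defining equations
invariant under `g` and `h`.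

For the group, `UT(3,3)` acts faithfully on `𝔸³` by
`(x, y, z) ↦ (x + a, y - c, z + c x + a y + b + a c)`, where `a b c` are the entries of
`UTMat a b c`; the correction `a c` turns the cocycle `a' c - a c'` of these shears into that of
matrix multiplication, up to `3 a c'`. The standard generators `UTMat 1 0 0` and `UTMat 0 0 1`,
which generate `UT(3,3)` since their commutator is `UTMat 0 1 0`, act as `g` and `h`. So
`⟨g, h⟩ ≅ UT(3,3)`, a non-abelian group of order 27 in which `M ^ 3 = 1` because `3 ∣ C(3, 2)`.
-/

namespace UT33

open scoped commutatorElement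

def mk (a b c : ZMod 3) : UT33 := ⟨UTMat a b c, a, b, c, rfl⟩

lemma exists_eq_mk (M : UT33) : ∃ a b c, M = mk a b c := by
  obtain ⟨_, a, b, c, rfl⟩ := M
  exact ⟨a, b, c, rfl⟩

lemma mk_inj {a b c a' b' c' : ZMod 3} :
    mk a b c = mk a' b' c' ↔ a = a' ∧ b = b' ∧ c = c' := by
  refine ⟨fun h => ?_, by rintro ⟨rfl, rfl, rfl⟩; rfl⟩
  have h' : UTMat a b c = UTMat a' b' c' := congrArg Subtype.val h
  exact ⟨congrFun (congrFun h' 0) 1, congrFun (congrFun h' 0) 2, congrFun (congrFun h' 1) 2⟩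

lemma mk_mul (a b c a' b' c' : ZMod 3) :
    mk a b c * mk a' b' c' = mk (a + a') (b + (b' + a * c')) (c + c') :=
  Subtype.ext (UTMat_mul a b c a' b' c')

lemma one_eq_mk : (1 : UT33) = mk 0 0 0 := Subtype.ext UTMat_one.symm

lemma mk_inv (a b c : ZMod 3) : (mk a b c)⁻¹ = mk (-a) (a * c - b) (-c) := rfl

lemma mk_pow (a b c : ZMod 3) (n : ℕ) :
    mk a b c ^ n = mk (n * a) (n * b + n.choose 2 * a * c) (n * c) := by
  induction n with
  | zero => simp [one_eq_mk]
  | succ n ih =>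
    rw [pow_succ, ih, mk_mul, mk_inj, Nat.choose_succ_succ, Nat.choose_one_right]
    push_cast
    exact ⟨by ring, by ring, by ring⟩

lemma pow_three_eq_one (M : UT33) : M ^ 3 = 1 := by
  obtain ⟨a, b, c, rfl⟩ := exists_eq_mk M
  rw [mk_pow, one_eq_mk, show Nat.choose 3 2 = 3 by rfl, ZMod.natCast_self]
  simp

lemma exponent_eq_three : Monoid.exponent UT33 = 3 := by
  refine Nat.dvd_antisymm (Monoid.exponent_dvd_of_forall_pow_eq_one pow_three_eq_one) ?_
  have hne : mk 1 0 0 ≠ 1 := by simp [one_eq_mk, mk_inj]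
  rw [← orderOf_eq_prime (hp := ⟨Nat.prime_three⟩) (pow_three_eq_one _) hne]
  exact Monoid.order_dvd_exponent _

lemma card_eq : Nat.card UT33 = 27 := by
  have hbij : Function.Bijective fun t : ZMod 3 × ZMod 3 × ZMod 3 => mk t.1 t.2.1 t.2.2 := by
    refine ⟨fun s t hst => ?_, fun M => ?_⟩
    · obtain ⟨h1, h2, h3⟩ := mk_inj.mp hst
      exact Prod.ext h1 (Prod.ext h2 h3)
    · obtain ⟨a, b, c, rfl⟩ := exists_eq_mk M
      exact ⟨(a, b, c), rfl⟩
  rw [← Nat.card_congr (Equiv.ofBijective _ hbij)]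
  simp

lemma not_commute_generators : ¬ Commute (mk 1 0 0) (mk 0 0 1) := by
  simp [Commute, SemiconjBy, mk_mul, mk_inj]

lemma commutatorElement_generators : ⁅mk 1 0 0, mk 0 0 1⁆ = mk 0 1 0 := by
  rw [commutatorElement_def, mk_inv, mk_inv, mk_mul, mk_mul, mk_mul, mk_inj]
  decide

lemma closure_generators : Subgroup.closure {mk 1 0 0, mk 0 0 1} = ⊤ := by
  set H := Subgroup.closure {mk 1 0 0, mk 0 0 1}
  have hg : mk 1 0 0 ∈ H := Subgroup.subset_closure (Set.mem_insert _ _)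
  have hh : mk 0 0 1 ∈ H := Subgroup.subset_closure (Set.mem_insert_of_mem _ rfl)
  have hk : mk 0 1 0 ∈ H := commutatorElement_generators ▸ H.mul_mem
    (H.mul_mem (H.mul_mem hg hh) (H.inv_mem hg)) (H.inv_mem hh)
  refine eq_top_iff.mpr fun M _ => ?_
  obtain ⟨a, b, c, rfl⟩ := exists_eq_mk M
  have hdecomp : mk a b c
      = mk 1 0 0 ^ a.val * mk 0 1 0 ^ (b - a * c).val * mk 0 0 1 ^ c.val := by
    simp only [mk_pow, mk_mul, mk_inj, ZMod.natCast_val, ZMod.cast_id', id]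
    exact ⟨by ring, by ring, by ring⟩
  rw [hdecomp]
  exact H.mul_mem (H.mul_mem (H.pow_mem hg _) (H.pow_mem hk _)) (H.pow_mem hh _)

section Action

variable (K : Type*) [CommRing K]

def affineAct (a b c : ZMod 3) (P : K × K × K) : K × K × K :=
  (P.1 + ZMod.cast a, P.2.1 - ZMod.cast c,
    P.2.2 + ZMod.cast c * P.1 + ZMod.cast a * P.2.1 + ZMod.cast (b + a * c))

instance : SMul UT33 (K × K × K) := ⟨fun M => affineAct K (M.1 0 1) (M.1 0 2) (M.1 1 2)⟩

lemma mk_smul (a b c : ZMod 3) (P : K × K × K) : mk a b c • P = affineAct K a b c P := rfl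

variable [CharP K 3]

instance : MulAction UT33 (K × K × K) where
  one_smul P := by simp [one_eq_mk, mk_smul, affineAct]
  mul_smul M N P := by
    obtain ⟨a, b, c, rfl⟩ := exists_eq_mk M
    obtain ⟨a', b', c', rfl⟩ := exists_eq_mk N
    simp only [mk_mul, mk_smul, affineAct, ZMod.cast_add', ZMod.cast_mul', Prod.mk.injEq]
    refine ⟨by ring, by ring, ?_⟩
    linear_combination (ZMod.cast a * ZMod.cast c' : K) * CharP.ofNat_eq_zero K 3

lemma eq_one_of_smul_zero {M : UT33} (h : M • (0 : K × K × K) = 0) : M = 1 := by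
  have cast_inj : ∀ x : ZMod 3, (ZMod.cast x : K) = 0 → x = 0 := fun x hx =>
    ZMod.castHom_injective K (by rw [map_zero, ZMod.castHom_apply]; exact hx)
  obtain ⟨a, b, c, rfl⟩ := exists_eq_mk M
  simp only [mk_smul, affineAct, Prod.ext_iff, Prod.fst_zero, Prod.snd_zero] at h
  obtain ⟨ha, hc, hb⟩ := h
  have ha : a = 0 := cast_inj a (by simpa using ha)
  have hc : c = 0 := cast_inj c (by simpa using hc)
  subst ha hc
  rw [cast_inj b (by simpa using hb), one_eq_mk]

lemma toPermHom_injective : Function.Injective (MulAction.toPermHom UT33 (K × K × K)) :=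
  (injective_iff_map_eq_one _).mpr fun _ hM =>
    eq_one_of_smul_zero K (by simpa using Equiv.congr_fun hM 0)

end Action

end UT33

section Field

open UT33

variable (K : Type*) [Field K] [CharP K 3]

lemma gPerm_mapsTo_curveV : Set.MapsTo (gPerm K) (curveV K) (curveV K) := by
  rintro ⟨x, y, z⟩ ⟨h1, h2⟩
  dsimp only [gPerm, Equiv.coe_fn_mk] at h1 h2 ⊢
  have h3 : (3 : K) = 0 := CharP.ofNat_eq_zero K 3
  refine ⟨?_, ?_⟩
  · linear_combination h1 + (x ^ 2 + x) * (y ^ 3 - y) * h3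
  · linear_combination h2 + (z ^ 2 * y + z * y ^ 2 + x ^ 2 * y + x * y) * h3

lemma hPerm_mapsTo_curveV : Set.MapsTo (hPerm K) (curveV K) (curveV K) := by
  rintro ⟨x, y, z⟩ ⟨h1, h2⟩
  dsimp only [hPerm, Equiv.coe_fn_mk] at h1 h2 ⊢
  have h3 : (3 : K) = 0 := CharP.ofNat_eq_zero K 3
  refine ⟨?_, ?_⟩
  · linear_combination h1 + (x ^ 3 - x) * (y - y ^ 2) * h3
  · linear_combination h2 + (z ^ 2 * x + z * x ^ 2 + x * y ^ 2 - x * y) * h3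

lemma toPermHom_mk_one_zero_zero :
    MulAction.toPermHom UT33 (K × K × K) (mk 1 0 0) = gPerm K := by
  ext ⟨x, y, z⟩ <;> simp [mk_smul, affineAct, gPerm]

lemma toPermHom_mk_zero_zero_one :
    MulAction.toPermHom UT33 (K × K × K) (mk 0 0 1) = hPerm K := by
  ext ⟨x, y, z⟩ <;> simp [mk_smul, affineAct, hPerm]

lemma range_toPermHom :
    (MulAction.toPermHom UT33 (K × K × K)).range = Subgroup.closure {gPerm K, hPerm K} := by
  rw [MonoidHom.range_eq_map, ← closure_generators, MonoidHom.map_closure, Set.image_pair,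
    toPermHom_mk_one_zero_zero, toPermHom_mk_zero_zero_one]

noncomputable def closureEquivUT33 : Subgroup.closure {gPerm K, hPerm K} ≃* UT33 :=
  (MulEquiv.subgroupCongr (range_toPermHom K).symm).trans
    (MonoidHom.ofInjective (toPermHom_injective K)).symm

end Field

theorem stmt_13 (K : Type*) [Field K] [CharP K 3] :
    (∀ P ∈ curveV K, gPerm K P ∈ curveV K) ∧
    (∀ P ∈ curveV K, hPerm K P ∈ curveV K) ∧
    (¬ ∀ a b : Subgroup.closure {gPerm K, hPerm K}, a * b = b * a) ∧
    Nat.card (Subgroup.closure {gPerm K, hPerm K}) = 27 ∧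
    Monoid.exponent (Subgroup.closure {gPerm K, hPerm K}) = 3 ∧
    Nonempty ((Subgroup.closure {gPerm K, hPerm K}) ≃* UT33) := by
  let e := closureEquivUT33 K
  refine ⟨gPerm_mapsTo_curveV K, hPerm_mapsTo_curveV K, fun hcomm => ?_,
    (Nat.card_congr e.toEquiv).trans UT33.card_eq,
    (Monoid.exponent_eq_of_mulEquiv e).trans UT33.exponent_eq_three, ⟨e⟩⟩
  apply UT33.not_commute_generators
  simpa [Commute, SemiconjBy] using congrArg e (hcomm (e.symm (UT33.mk 1 0 0)) (e.symm (UT33.mk 0 0 1)))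
end

section
/- Let K be a field of characteristic 3. The four maps g₁: (X,Y,U,V) ↦ (X, Y+1, U, V), g₂: (X,Y,U,V) ↦ (X, Y, U+1, V), g₃: (X,Y,U,V) ↦ (X, Y, U, V+1), g₄: (X,Y,U,V) ↦ (X+1, Y, V, −Y−U−V) preserve the affine variety in A⁴ defined by (X³−X)(Y³−Y) = 1, X(U³−U) = 1, (X+1)(V³−V) = 1, and they generate a non-abelian group of order 81 isomorphic to the wreath product C₃ ≀ C₃ (the Sylow 3-subgroup of the symmetric group S₉). -/
/-- The affine variety in `𝔸⁴` cut out by `(X³-X)(Y³-Y) = 1`, `X(U³-U) = 1` and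
`(X+1)(V³-V) = 1`. -/
def curveW (K : Type*) [Field K] : Set (K × K × K × K) :=
  {P | (P.1 ^ 3 - P.1) * (P.2.1 ^ 3 - P.2.1) = 1 ∧
       P.1 * (P.2.2.1 ^ 3 - P.2.2.1) = 1 ∧
       (P.1 + 1) * (P.2.2.2 ^ 3 - P.2.2.2) = 1}

/-- `g₁ : (X,Y,U,V) ↦ (X, Y+1, U, V)`. -/
def g1Perm (K : Type*) [Field K] : Equiv.Perm (K × K × K × K) where
  toFun P := (P.1, P.2.1 + 1, P.2.2.1, P.2.2.2)
  invFun P := (P.1, P.2.1 - 1, P.2.2.1, P.2.2.2)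
  left_inv P := by obtain ⟨x, y, u, v⟩ := P; simp only [Prod.mk.injEq]
                   and_intros <;> first | trivial | ring
  right_inv P := by obtain ⟨x, y, u, v⟩ := P; simp only [Prod.mk.injEq]
                    and_intros <;> first | trivial | ring

/-- `g₂ : (X,Y,U,V) ↦ (X, Y, U+1, V)`. -/
def g2Perm (K : Type*) [Field K] : Equiv.Perm (K × K × K × K) where
  toFun P := (P.1, P.2.1, P.2.2.1 + 1, P.2.2.2)
  invFun P := (P.1, P.2.1, P.2.2.1 - 1, P.2.2.2)
  left_inv P := by obtain ⟨x, y, u, v⟩ := P; simp only [Prod.mk.injEq]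
                   and_intros <;> first | trivial | ring
  right_inv P := by obtain ⟨x, y, u, v⟩ := P; simp only [Prod.mk.injEq]
                    and_intros <;> first | trivial | ring

/-- `g₃ : (X,Y,U,V) ↦ (X, Y, U, V+1)`. -/
def g3Perm (K : Type*) [Field K] : Equiv.Perm (K × K × K × K) where
  toFun P := (P.1, P.2.1, P.2.2.1, P.2.2.2 + 1)
  invFun P := (P.1, P.2.1, P.2.2.1, P.2.2.2 - 1)
  left_inv P := by obtain ⟨x, y, u, v⟩ := P; simp only [Prod.mk.injEq]
                   and_intros <;> first | trivial | ring
  right_inv P := by obtain ⟨x, y, u, v⟩ := P; simp only [Prod.mk.injEq]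
                    and_intros <;> first | trivial | ring

/-- `g₄ : (X,Y,U,V) ↦ (X+1, Y, V, -Y-U-V)`. -/
def g4Perm (K : Type*) [Field K] : Equiv.Perm (K × K × K × K) where
  toFun P := (P.1 + 1, P.2.1, P.2.2.2, -P.2.1 - P.2.2.1 - P.2.2.2)
  invFun P := (P.1 - 1, P.2.1, -P.2.1 - P.2.2.1 - P.2.2.2, P.2.2.1)
  left_inv P := by obtain ⟨x, y, u, v⟩ := P; simp only [Prod.mk.injEq]
                   and_intros <;> first | trivial | ring
  right_inv P := by obtain ⟨x, y, u, v⟩ := P; simp only [Prod.mk.injEq]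
                    and_intros <;> first | trivial | ring


/-! ### Auxiliary model group on `ZMod 3` data -/

abbrev V3 := ZMod 3 × ZMod 3 × ZMod 3
abbrev A4 := ZMod 3 × V3

def Mact (v : V3) : V3 := (v.1, v.2.2, -v.1 - v.2.1 - v.2.2)
def Mpow (i : ZMod 3) (v : V3) : V3 :=
  if i = 0 then v else if i = 1 then Mact v else Mact (Mact v)
def mMul (a b : A4) : A4 := (a.1 + b.1, a.2 + Mpow a.1 b.2)
def mInv (a : A4) : A4 := (-a.1, -(Mpow (-a.1) a.2))

set_option maxRecDepth 10000

theorem mInv_law : ∀ a : A4, mMul (mInv a) a = (0,(0,0,0)) ∧ mMul a (mInv a) = (0,(0,0,0)) := by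
  decide

theorem zmod3_cases (i : ZMod 3) : i = 0 ∨ i = 1 ∨ i = 2 := by revert i; decide

/-! ### The nine-point model -/

def rep3 (k r : ZMod 3) : V3 := if k = 1 then (0, r, 0) else (0, 0, r)
def res3 (k : ZMod 3) (w : V3) : ZMod 3 :=
  if k = 0 then w.2.2 else if k = 1 then w.2.1 else w.1 + w.2.1 + w.2.2
def f9 (a : A4) (p : ZMod 3 × ZMod 3) : ZMod 3 × ZMod 3 :=
  (a.1 + p.1, res3 (a.1 + p.1) (a.2 + Mpow a.1 (rep3 p.1 p.2)))

theorem Mpow_add : ∀ i j (w : V3), Mpow (i+j) w = Mpow i (Mpow j w) := by decide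
theorem Mpow_linear : ∀ i (w w' : V3), Mpow i (w+w') = Mpow i w + Mpow i w' := by decide
theorem res3_add : ∀ k (w w' : V3), res3 k (w+w') = res3 k w + res3 k w' := by decide
theorem repres : ∀ i k (w : V3),
    res3 (i+k) (Mpow i (rep3 k (res3 k w))) = res3 (i+k) (Mpow i w) := by decide
theorem rep3_add : ∀ k r s, rep3 k (r+s) = rep3 k r + rep3 k s := by decide

theorem f9_law (a b : A4) (p : ZMod 3 × ZMod 3) : f9 (mMul a b) p = f9 a (f9 b p) := by
  obtain ⟨i, v⟩ := a; obtain ⟨j, w⟩ := b; obtain ⟨k, r⟩ := p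
  show ((i+j)+k, res3 ((i+j)+k) (v + Mpow i w + Mpow (i+j) (rep3 k r)))
     = (i+(j+k), res3 (i+(j+k)) (v + Mpow i (rep3 (j+k) (res3 (j+k) (w + Mpow j (rep3 k r))))))
  have hT : (i+j)+k = i+(j+k) := add_assoc i j k
  refine Prod.ext hT ?_
  simp only [res3_add, rep3_add, Mpow_linear, repres, hT, Mpow_add]
  ring

theorem f9_inj3 : ∀ a b : A4, f9 a (0,0) = f9 b (0,0) → f9 a (1,0) = f9 b (1,0) →
    f9 a (2,0) = f9 b (2,0) → a = b := by decide
theorem f9_one : ∀ p, f9 ((0:ZMod 3),((0:ZMod 3),(0:ZMod 3),(0:ZMod 3))) p = p := by decide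

def dec9 (n : Fin 9) : ZMod 3 × ZMod 3 := (((n : ℕ) / 3 : ℕ), ((n : ℕ) % 3 : ℕ))
def enc9 (p : ZMod 3 × ZMod 3) : Fin 9 :=
  ⟨3 * p.1.val + p.2.val, by have h1 := p.1.val_lt; have h2 := p.2.val_lt; omega⟩

theorem dec_enc : ∀ p, dec9 (enc9 p) = p := by decide
theorem enc_dec : ∀ n, enc9 (dec9 n) = n := by decide

def e9 (a : A4) : Equiv.Perm (Fin 9) where
  toFun n := enc9 (f9 a (dec9 n))
  invFun n := enc9 (f9 (mInv a) (dec9 n))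
  left_inv n := by
    show enc9 (f9 (mInv a) (dec9 (enc9 (f9 a (dec9 n))))) = n
    rw [dec_enc, ← f9_law, (mInv_law a).1, f9_one, enc_dec]
  right_inv n := by
    show enc9 (f9 a (dec9 (enc9 (f9 (mInv a) (dec9 n))))) = n
    rw [dec_enc, ← f9_law, (mInv_law a).2, f9_one, enc_dec]

theorem e9_law (a b : A4) : e9 a * e9 b = e9 (mMul a b) := Equiv.ext fun n => by
  show enc9 (f9 a (dec9 (enc9 (f9 b (dec9 n))))) = enc9 (f9 (mMul a b) (dec9 n))
  rw [dec_enc, f9_law]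

theorem e9_one : e9 ((0:ZMod 3),((0:ZMod 3),(0:ZMod 3),(0:ZMod 3))) = 1 := Equiv.ext fun n => by
  show enc9 (f9 _ (dec9 n)) = n
  rw [f9_one, enc_dec]

theorem e9_injective : Function.Injective e9 := by
  intro a b h
  have hp : ∀ p, f9 a p = f9 b p := by
    intro p
    have := congrArg (fun σ : Equiv.Perm (Fin 9) => dec9 (σ (enc9 p))) h
    simpa [e9, dec_enc] using this
  exact f9_inj3 a b (hp _) (hp _) (hp _)

def Q9 : Subgroup (Equiv.Perm (Fin 9)) where
  carrier := Set.range e9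
  one_mem' := ⟨((0:ZMod 3),((0:ZMod 3),(0:ZMod 3),(0:ZMod 3))), e9_one⟩
  mul_mem' := by rintro _ _ ⟨a, rfl⟩ ⟨b, rfl⟩; exact ⟨mMul a b, (e9_law a b).symm⟩
  inv_mem' := by
    rintro _ ⟨a, rfl⟩
    exact ⟨mInv a, (inv_eq_of_mul_eq_one_right (by rw [e9_law, (mInv_law a).2, e9_one])).symm⟩

theorem cardA4 : Nat.card A4 = 81 := by simp [Nat.card_eq_fintype_card]

theorem Q9_card : Nat.card Q9 = 81 := by
  have h : Nat.card Q9 = Nat.card (Set.range e9) := rfl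
  rw [h, ← Nat.card_congr (Equiv.ofInjective e9 e9_injective), cardA4]

theorem Q9_sylow : ∃ P : Sylow 3 (Equiv.Perm (Fin 9)), P.toSubgroup = Q9 := by
  have hp : IsPGroup 3 Q9 := IsPGroup.of_card (n := 4) (by rw [Q9_card]; norm_num)
  obtain ⟨P, hle⟩ := hp.exists_le_sylow
  have h1 : Nat.card P ∣ Nat.card (Equiv.Perm (Fin 9)) := Subgroup.card_subgroup_dvd_card _
  have hG : Nat.card (Equiv.Perm (Fin 9)) = 362880 := by
    rw [Nat.card_eq_fintype_card, Fintype.card_perm]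
    simp [Nat.factorial]
  obtain ⟨n, hn⟩ := IsPGroup.iff_card.mp P.isPGroup'
  have hn4 : n ≤ 4 := by
    by_contra h
    push_neg at h
    have : (3:ℕ)^5 ∣ 362880 := dvd_trans (pow_dvd_pow 3 h) (by rw [← hG, ← hn]; exact h1)
    norm_num at this
  have hcardle : Nat.card P ≤ 81 := by
    rw [hn]
    calc (3:ℕ)^n ≤ 3^4 := Nat.pow_le_pow_right (by norm_num) hn4
    _ = 81 := by norm_num
  exact ⟨P, (Subgroup.eq_of_le_of_card_ge hle (by rw [Q9_card]; exact hcardle)).symm⟩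

/-! ### The field side -/

section KSide
set_option linter.unusedSectionVars false
variable (K : Type*) [Field K] [CharP K 3]

noncomputable def phiK : ZMod 3 →+* K := ZMod.castHom dvd_rfl K

theorem cast_val (z : ZMod 3) : ((z.val : ℕ) : K) = phiK K z := by
  rw [ZMod.natCast_val, phiK, ZMod.castHom_apply]

theorem hchar : (3 : K) = 0 := by
  have := CharP.cast_eq_zero K 3
  simpa using this

theorem g1_pow (n : ℕ) (P : K × K × K × K) :
    (g1Perm K ^ n) P = (P.1, P.2.1 + n, P.2.2.1, P.2.2.2) := by
  induction n with
  | zero => simp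
  | succ n ih =>
    rw [pow_succ', Equiv.Perm.mul_apply, ih]
    show (P.1, P.2.1 + (n:K) + 1, P.2.2.1, P.2.2.2) = (P.1, P.2.1 + ((n+1 : ℕ):K), P.2.2.1, P.2.2.2)
    refine Prod.ext rfl (Prod.ext ?_ rfl)
    show P.2.1 + (n:K) + 1 = P.2.1 + ((n+1 : ℕ):K)
    push_cast
    ring

theorem g2_pow (n : ℕ) (P : K × K × K × K) :
    (g2Perm K ^ n) P = (P.1, P.2.1, P.2.2.1 + n, P.2.2.2) := by
  induction n with
  | zero => simp
  | succ n ih =>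
    rw [pow_succ', Equiv.Perm.mul_apply, ih]
    show (P.1, P.2.1, P.2.2.1 + (n:K) + 1, P.2.2.2) = (P.1, P.2.1, P.2.2.1 + ((n+1 : ℕ):K), P.2.2.2)
    refine Prod.ext rfl (Prod.ext rfl (Prod.ext ?_ rfl))
    show P.2.2.1 + (n:K) + 1 = P.2.2.1 + ((n+1 : ℕ):K)
    push_cast
    ring

theorem g3_pow (n : ℕ) (P : K × K × K × K) :
    (g3Perm K ^ n) P = (P.1, P.2.1, P.2.2.1, P.2.2.2 + n) := by
  induction n with
  | zero => simp
  | succ n ih =>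
    rw [pow_succ', Equiv.Perm.mul_apply, ih]
    show (P.1, P.2.1, P.2.2.1, P.2.2.2 + (n:K) + 1) = (P.1, P.2.1, P.2.2.1, P.2.2.2 + ((n+1 : ℕ):K))
    refine Prod.ext rfl (Prod.ext rfl (Prod.ext rfl ?_))
    show P.2.2.2 + (n:K) + 1 = P.2.2.2 + ((n+1 : ℕ):K)
    push_cast
    ring

noncomputable def tK (v : V3) : Equiv.Perm (K × K × K × K) :=
  g1Perm K ^ v.1.val * (g2Perm K ^ v.2.1.val * g3Perm K ^ v.2.2.val)

theorem tK_apply (v : V3) (Q : K × K × K × K) :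
    tK K v Q = (Q.1, Q.2.1 + phiK K v.1, Q.2.2.1 + phiK K v.2.1, Q.2.2.2 + phiK K v.2.2) := by
  simp only [tK, Equiv.Perm.mul_apply, g3_pow, g2_pow, g1_pow, cast_val]

noncomputable def eK (a : A4) : Equiv.Perm (K × K × K × K) := tK K a.2 * g4Perm K ^ a.1.val

noncomputable def affK (a : A4) (P : K × K × K × K) : K × K × K × K :=
  if a.1 = 0 then (P.1, P.2.1 + phiK K a.2.1, P.2.2.1 + phiK K a.2.2.1, P.2.2.2 + phiK K a.2.2.2)
  else if a.1 = 1 then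
    (P.1 + 1, P.2.1 + phiK K a.2.1, P.2.2.2 + phiK K a.2.2.1,
      -P.2.1 - P.2.2.1 - P.2.2.2 + phiK K a.2.2.2)
  else
    (P.1 + 1 + 1, P.2.1 + phiK K a.2.1, -P.2.1 - P.2.2.1 - P.2.2.2 + phiK K a.2.2.1,
      P.2.2.1 + phiK K a.2.2.2)

theorem eK_apply (a : A4) (P : K × K × K × K) : eK K a P = affK K a P := by
  obtain ⟨i, v⟩ := a
  rcases zmod3_cases i with rfl | rfl | rfl
  · show tK K v ((g4Perm K ^ (0:ZMod 3).val) P) = _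
    rw [show (0:ZMod 3).val = 0 from rfl, pow_zero]
    rw [affK, if_pos rfl]
    exact tK_apply K v P
  · show tK K v ((g4Perm K ^ (1:ZMod 3).val) P) = _
    rw [show (1:ZMod 3).val = 1 from rfl, pow_one]
    rw [affK, if_neg (show ¬((1:ZMod 3) = 0) by decide), if_pos rfl]
    rw [show (g4Perm K) P = (P.1 + 1, P.2.1, P.2.2.2, -P.2.1 - P.2.2.1 - P.2.2.2) from rfl, tK_apply]
  · show tK K v ((g4Perm K ^ (2:ZMod 3).val) P) = _
    rw [show (2:ZMod 3).val = 2 from rfl, sq, Equiv.Perm.mul_apply]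
    rw [affK, if_neg (show ¬((2:ZMod 3) = 0) by decide), if_neg (show ¬((2:ZMod 3) = 1) by decide)]
    rw [show (g4Perm K) P = (P.1 + 1, P.2.1, P.2.2.2, -P.2.1 - P.2.2.1 - P.2.2.2) from rfl]
    rw [show (g4Perm K) ((P.1 + 1, P.2.1, P.2.2.2, -P.2.1 - P.2.2.1 - P.2.2.2) : K × K × K × K)
        = (P.1 + 1 + 1, P.2.1, -P.2.1 - P.2.2.1 - P.2.2.2,
            -P.2.1 - P.2.2.2 - (-P.2.1 - P.2.2.1 - P.2.2.2)) from rfl, tK_apply]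
    refine Prod.ext rfl (Prod.ext rfl (Prod.ext rfl ?_))
    show -P.2.1 - P.2.2.2 - (-P.2.1 - P.2.2.1 - P.2.2.2) + phiK K v.2.2 = P.2.2.1 + phiK K v.2.2
    ring

set_option maxHeartbeats 1200000 in
theorem eK_law (a b : A4) : eK K a * eK K b = eK K (mMul a b) := by
  apply Equiv.ext; intro P
  rw [Equiv.Perm.mul_apply, eK_apply, eK_apply, eK_apply]
  obtain ⟨i, v⟩ := a; obtain ⟨j, w⟩ := b
  rcases zmod3_cases i with rfl | rfl | rfl <;> rcases zmod3_cases j with rfl | rfl | rfl <;>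
    simp (config := { decide := true }) only [mMul, Mpow, Mact, affK, Prod.mk.injEq,
      Prod.fst_add, Prod.snd_add, map_add, map_neg, map_sub, if_true, if_false, ite_true,
      ite_false] <;>
    and_intros <;>
    first
      | rfl
      | ring1
      | (reduce_mod_char; done)
      | linear_combination hchar K
      | linear_combination -hchar K
      | linear_combination 2 * hchar K
      | linear_combination P.2.1 * hchar K
      | linear_combination -P.2.1 * hchar K

theorem eK_one : eK K ((0:ZMod 3),((0:ZMod 3),(0:ZMod 3),(0:ZMod 3))) = 1 := by
  apply Equiv.ext; intro P
  rw [eK_apply]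
  show affK K _ P = P
  rw [affK, if_pos rfl]
  simp only [map_zero, add_zero]

theorem eK_origin (a : A4) :
    eK K a ((0:K), (0:K), (0:K), (0:K)) = (phiK K a.1, phiK K a.2.1, phiK K a.2.2.1, phiK K a.2.2.2) := by
  obtain ⟨i, v⟩ := a
  rw [eK_apply]
  rcases zmod3_cases i with rfl | rfl | rfl
  · rw [affK, if_pos rfl]
    simp only [map_zero, zero_add]
  · rw [affK, if_neg (show ¬((1:ZMod 3) = 0) by decide), if_pos rfl]
    simp only [map_one, map_zero, zero_add]
    norm_num
  · rw [affK, if_neg (show ¬((2:ZMod 3) = 0) by decide), if_neg (show ¬((2:ZMod 3) = 1) by decide)]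
    rw [show (2:ZMod 3) = 1 + 1 from rfl]
    simp only [map_add, map_one, map_zero, zero_add]
    norm_num

theorem eK_inj : Function.Injective (eK K) := by
  have hphi : Function.Injective (phiK K) := by
    haveI : Fact (Nat.Prime 3) := ⟨by norm_num⟩
    exact (phiK K).injective
  intro a b h
  have h0 := congrArg (fun σ : Equiv.Perm (K × K × K × K) => σ ((0:K),(0:K),(0:K),(0:K))) h
  simp only [eK_origin, Prod.mk.injEq] at h0
  obtain ⟨h1, h2, h3, h4⟩ := h0
  obtain ⟨i, b1, b2, b3⟩ := a
  obtain ⟨j, c1, c2, c3⟩ := b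
  simp only at h1 h2 h3 h4
  exact Prod.ext (hphi h1) (Prod.ext (hphi h2) (Prod.ext (hphi h3) (hphi h4)))

noncomputable def SK : Subgroup (Equiv.Perm (K × K × K × K)) where
  carrier := Set.range (eK K)
  one_mem' := ⟨((0:ZMod 3),((0:ZMod 3),(0:ZMod 3),(0:ZMod 3))), eK_one K⟩
  mul_mem' := by rintro _ _ ⟨a, rfl⟩ ⟨b, rfl⟩; exact ⟨mMul a b, (eK_law K a b).symm⟩
  inv_mem' := by
    rintro _ ⟨a, rfl⟩
    exact ⟨mInv a,
      (inv_eq_of_mul_eq_one_right (by rw [eK_law, (mInv_law a).2, eK_one])).symm⟩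

theorem eK_g1 : eK K ((0:ZMod 3),((1:ZMod 3),0,0)) = g1Perm K := by
  show g1Perm K ^ (1:ZMod 3).val * (g2Perm K ^ (0:ZMod 3).val * g3Perm K ^ (0:ZMod 3).val) *
      g4Perm K ^ (0:ZMod 3).val = _
  rw [show (1:ZMod 3).val = 1 from rfl, show (0:ZMod 3).val = 0 from rfl]
  simp

theorem eK_g2 : eK K ((0:ZMod 3),((0:ZMod 3),1,0)) = g2Perm K := by
  show g1Perm K ^ (0:ZMod 3).val * (g2Perm K ^ (1:ZMod 3).val * g3Perm K ^ (0:ZMod 3).val) *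
      g4Perm K ^ (0:ZMod 3).val = _
  rw [show (1:ZMod 3).val = 1 from rfl, show (0:ZMod 3).val = 0 from rfl]
  simp

theorem eK_g3 : eK K ((0:ZMod 3),((0:ZMod 3),0,1)) = g3Perm K := by
  show g1Perm K ^ (0:ZMod 3).val * (g2Perm K ^ (0:ZMod 3).val * g3Perm K ^ (1:ZMod 3).val) *
      g4Perm K ^ (0:ZMod 3).val = _
  rw [show (1:ZMod 3).val = 1 from rfl, show (0:ZMod 3).val = 0 from rfl]
  simp

theorem eK_g4 : eK K ((1:ZMod 3),((0:ZMod 3),0,0)) = g4Perm K := by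
  show g1Perm K ^ (0:ZMod 3).val * (g2Perm K ^ (0:ZMod 3).val * g3Perm K ^ (0:ZMod 3).val) *
      g4Perm K ^ (1:ZMod 3).val = _
  rw [show (1:ZMod 3).val = 1 from rfl, show (0:ZMod 3).val = 0 from rfl]
  simp

theorem closure_eq : Subgroup.closure {g1Perm K, g2Perm K, g3Perm K, g4Perm K} = SK K := by
  apply le_antisymm
  · rw [Subgroup.closure_le]
    rintro σ (rfl | rfl | rfl | rfl)
    · exact ⟨_, eK_g1 K⟩
    · exact ⟨_, eK_g2 K⟩
    · exact ⟨_, eK_g3 K⟩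
    · exact ⟨_, eK_g4 K⟩
  · rintro σ ⟨a, rfl⟩
    have h1 : g1Perm K ∈ Subgroup.closure {g1Perm K, g2Perm K, g3Perm K, g4Perm K} :=
      Subgroup.subset_closure (by simp)
    have h2 : g2Perm K ∈ Subgroup.closure {g1Perm K, g2Perm K, g3Perm K, g4Perm K} :=
      Subgroup.subset_closure (by simp)
    have h3 : g3Perm K ∈ Subgroup.closure {g1Perm K, g2Perm K, g3Perm K, g4Perm K} :=
      Subgroup.subset_closure (by simp)
    have h4 : g4Perm K ∈ Subgroup.closure {g1Perm K, g2Perm K, g3Perm K, g4Perm K} :=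
      Subgroup.subset_closure (by simp)
    exact mul_mem (mul_mem (pow_mem h1 _) (mul_mem (pow_mem h2 _) (pow_mem h3 _))) (pow_mem h4 _)

/-- The key isomorphism between the two concrete realizations of the group. -/
noncomputable def skq9 : SK K ≃* Q9 := by
  refine MulEquiv.mk' ⟨?_, ?_, ?_, ?_⟩ ?_
  · exact fun σ => ⟨e9 ((Equiv.ofInjective (eK K) (eK_inj K)).symm ⟨σ.1, σ.2⟩), _, rfl⟩
  · exact fun τ => ⟨eK K ((Equiv.ofInjective e9 e9_injective).symm ⟨τ.1, τ.2⟩), _, rfl⟩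
  · intro σ
    apply Subtype.ext
    show eK K ((Equiv.ofInjective e9 e9_injective).symm ⟨e9 _, _⟩) = σ.1
    rw [show (⟨e9 _, _, rfl⟩ : Set.range e9) = Equiv.ofInjective e9 e9_injective _ from
        Subtype.ext rfl, Equiv.symm_apply_apply, Equiv.apply_ofInjective_symm (eK_inj K)]
  · intro τ
    apply Subtype.ext
    show e9 ((Equiv.ofInjective (eK K) (eK_inj K)).symm ⟨eK K _, _⟩) = τ.1
    rw [show (⟨eK K _, _, rfl⟩ : Set.range (eK K)) = Equiv.ofInjective (eK K) (eK_inj K) _ from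
        Subtype.ext rfl, Equiv.symm_apply_apply, Equiv.apply_ofInjective_symm e9_injective]
  · intro σ τ
    apply Subtype.ext
    show e9 ((Equiv.ofInjective (eK K) (eK_inj K)).symm ⟨σ.1 * τ.1, _⟩)
        = e9 _ * e9 _
    rw [e9_law]
    congr 1
    apply eK_inj K
    rw [Equiv.apply_ofInjective_symm (eK_inj K), ← eK_law,
      Equiv.apply_ofInjective_symm (eK_inj K), Equiv.apply_ofInjective_symm (eK_inj K)]

theorem SK_card : Nat.card (SK K) = 81 := by
  have h : Nat.card (SK K) = Nat.card (Set.range (eK K)) := rfl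
  rw [h, ← Nat.card_congr (Equiv.ofInjective (eK K) (eK_inj K)), cardA4]

end KSide

theorem stmt_15 (K : Type*) [Field K] [CharP K 3] :
    (∀ P ∈ curveW K, g1Perm K P ∈ curveW K) ∧
    (∀ P ∈ curveW K, g2Perm K P ∈ curveW K) ∧
    (∀ P ∈ curveW K, g3Perm K P ∈ curveW K) ∧
    (∀ P ∈ curveW K, g4Perm K P ∈ curveW K) ∧
    (¬ ∀ a b : Subgroup.closure {g1Perm K, g2Perm K, g3Perm K, g4Perm K}, a * b = b * a) ∧
    Nat.card (Subgroup.closure {g1Perm K, g2Perm K, g3Perm K, g4Perm K}) = 81 ∧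
    ∀ P : Sylow 3 (Equiv.Perm (Fin 9)),
      Nonempty ((Subgroup.closure {g1Perm K, g2Perm K, g3Perm K, g4Perm K}) ≃*
        (P : Subgroup (Equiv.Perm (Fin 9)))) := by
  haveI : Fact (Nat.Prime 3) := ⟨by norm_num⟩
  have hc : (3:K) = 0 := hchar K
  refine ⟨?_, ?_, ?_, ?_, ?_, ?_, ?_⟩
  · rintro ⟨x, y, u, v⟩ ⟨h1, h2, h3⟩
    refine ⟨?_, ?_, ?_⟩
    · show (x^3 - x) * ((y+1)^3 - (y+1)) = 1
      linear_combination h1 + ((x^3 - x)*(y^2 + y)) * hc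
    · exact h2
    · exact h3
  · rintro ⟨x, y, u, v⟩ ⟨h1, h2, h3⟩
    refine ⟨?_, ?_, ?_⟩
    · exact h1
    · show x * ((u+1)^3 - (u+1)) = 1
      linear_combination h2 + (x*(u^2 + u)) * hc
    · exact h3
  · rintro ⟨x, y, u, v⟩ ⟨h1, h2, h3⟩
    refine ⟨?_, ?_, ?_⟩
    · exact h1
    · exact h2
    · show (x+1) * ((v+1)^3 - (v+1)) = 1
      linear_combination h3 + ((x+1)*(v^2 + v)) * hc
  · rintro ⟨x, y, u, v⟩ ⟨h1, h2, h3⟩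
    refine ⟨?_, ?_, ?_⟩
    · show ((x+1)^3 - (x+1)) * (y^3 - y) = 1
      linear_combination h1 + ((x^2 + x)*(y^3 - y)) * hc
    · show (x+1) * (v^3 - v) = 1
      exact h3
    · show ((x+1)+1) * ((-y-u-v)^3 - (-y-u-v)) = 1
      linear_combination (-((u^3-u) + 2*(v^3-v))) * h1 + ((x^2-1)*(y^3-y) - 1) * h2 +
        (2*(x^2-x)*(y^3-y) - 1) * h3 +
        ((x^2-x)*(y^3-y) - 1 - ((y^3-y)+(u^3-u)+(v^3-v)) -
          (x+2)*(y^2*u + y^2*v + u^2*y + u^2*v + v^2*y + v^2*u + 2*y*u*v)) * hc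
  · intro hab
    have h := hab
      ⟨g4Perm K, Subgroup.subset_closure (by simp)⟩
      ⟨g2Perm K, Subgroup.subset_closure (by simp)⟩
    have h' : g4Perm K * g2Perm K = g2Perm K * g4Perm K := congrArg Subtype.val h
    have h0 := congrArg
      (fun σ : Equiv.Perm (K × K × K × K) => (σ ((0:K),(0:K),(0:K),(0:K))).2.2.1) h'
    simp only [Equiv.Perm.mul_apply, g4Perm, g2Perm, Equiv.coe_fn_mk] at h0
    exact one_ne_zero (by linear_combination -h0)
  · rw [closure_eq]
    exact SK_card K
  · intro P
    obtain ⟨P0, hP0⟩ := Q9_sylow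
    refine ⟨?_⟩
    have e1 : (Subgroup.closure {g1Perm K, g2Perm K, g3Perm K, g4Perm K}) ≃* SK K :=
      MulEquiv.subgroupCongr (closure_eq K)
    have e2 : SK K ≃* Q9 := skq9 K
    have e3 : Q9 ≃* P0.toSubgroup := MulEquiv.subgroupCongr hP0.symm
    have e4 : P0.toSubgroup ≃* (P : Subgroup (Equiv.Perm (Fin 9))) := Sylow.equiv P0 P
    exact e1.trans (e2.trans (e3.trans e4))
end

section
/- Let S be a finite p-group of order p^n with n ≥ 3 such that the commutator subgroup S' equals the Frattini subgroup Φ(S) and has index p² in S. If S has an abelian maximal subgroup, then S is of maximal class, i.e., its nilpotency class equals n − 1. -/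
/-!
Let `A` be an abelian maximal subgroup of `G` and `x ∉ A`. Then `a ↦ ⁅a, x⁆` is a homomorphism
`A →* G` with kernel `Z(G)` and image `G'`, so `|A| = |Z(G)| |G'|`, which forces `|Z(G)| = p`.
The nontrivial normal subgroup `G'` meets `Z(G)`, hence contains it, so `G ⧸ Z(G)` again has
derived subgroup of index `p²` and an abelian maximal subgroup, and induction on `n` shows that
the class grows by one with each factor `p`, starting from the abelian group of order `p²`.
-/

open Subgroup
open scoped commutatorElement

section

variable {G : Type*} [Group G]

theorem Subgroup.closure_insert_eq_sup_zpowers (H : Subgroup G) (x : G) :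
    closure (insert x (H : Set G)) = H ⊔ zpowers x := by
  rw [Set.insert_eq, Subgroup.closure_union, closure_eq, zpowers_eq_closure, sup_comm]

theorem IsCoatom.sup_zpowers_eq_top {H : Subgroup G} (hH : IsCoatom H) {x : G} (hx : x ∉ H) :
    H ⊔ zpowers x = ⊤ :=
  hH.2 _ (left_lt_sup.mpr (by rwa [zpowers_le]))

theorem Subgroup.isCoatom_of_index_prime {H : Subgroup G} (hH : H.index.Prime) : IsCoatom H := by
  have : H.FiniteIndex := ⟨hH.ne_zero⟩
  refine ⟨fun h => Nat.not_prime_one (by rwa [h, index_top] at hH), fun K hK => ?_⟩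
  rcases (Nat.dvd_prime hH).mp (index_dvd_of_le hK.le) with h | h
  · exact index_eq_one.mp h
  · exact absurd h (index_strictAnti hK).ne

theorem Subgroup.le_of_inf_ne_bot_of_card_prime {H K : Subgroup G} [Finite H]
    (hH : (Nat.card H).Prime) (hHK : K ⊓ H ≠ ⊥) : H ≤ K := by
  rcases (Nat.dvd_prime hH).mp (card_dvd_of_le (inf_le_right : K ⊓ H ≤ H)) with h | h
  · exact absurd (card_eq_one.mp h) hHK
  · exact inf_eq_right.mp (eq_of_le_of_card_ge inf_le_right h.ge)

theorem Subgroup.map_commutator_of_surjective {G' : Type*} [Group G'] {f : G →* G'}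
    (hf : Function.Surjective f) : (_root_.commutator G).map f = _root_.commutator G' := by
  rw [map_commutator_eq, MonoidHom.range_eq_top.mpr hf, _root_.commutator_def]

theorem Subgroup.Normal.commutatorElement_mem_left {A : Subgroup G} (hA : A.Normal) {a : G}
    (ha : a ∈ A) (g : G) : ⁅a, g⁆ ∈ A :=
  commutator_le_left A ⊤ (commutator_mem_commutator ha (mem_top g))

theorem commutator_le_of_closure_eq_top {N : Subgroup G} [N.Normal] {s : Set G}
    (hs : closure s = ⊤) (h : ∀ a ∈ s, ∀ b ∈ s, ⁅a, b⁆ ∈ N) : commutator G ≤ N := by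
  rw [← Normal.quotient_commutative_iff_commutator_le]
  set π := QuotientGroup.mk' N
  have hcomm : ∀ a ∈ π '' s, ∀ b ∈ π '' s, a * b = b * a := by
    rintro _ ⟨a, ha, rfl⟩ _ ⟨b, hb, rfl⟩
    rw [← commutatorElement_eq_one_iff_mul_comm, ← map_commutatorElement, QuotientGroup.mk'_apply,
      QuotientGroup.eq_one_iff]
    exact h a ha b hb
  have hgen := closure_le_centralizer_centralizer (π '' s)
  rw [← MonoidHom.map_closure, hs, map_top_of_surjective π (QuotientGroup.mk'_surjective N)] at hgen
  exact ⟨⟨fun g k => Set.centralizer_centralizer_comm_of_comm hcomm g (hgen (mem_top g)) k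
    (hgen (mem_top k))⟩⟩

theorem center_le_of_isCoatom {A : Subgroup G} [IsMulCommutative A] (hA : IsCoatom A)
    (hG : commutator G ≠ ⊥) : center G ≤ A := by
  intro z hz
  by_contra hzA
  refine hG (le_bot_iff.mp (commutator_le_of_closure_eq_top
    (closure_insert_eq_sup_zpowers A z ▸ hA.sup_zpowers_eq_top hzA) ?_))
  rintro a (rfl | ha) b (rfl | hb) <;> rw [mem_bot, commutatorElement_eq_one_iff_mul_comm]
  · exact (mem_center_iff.mp hz b).symm
  · exact mem_center_iff.mp hz a
  · exact setLike_mul_comm ha hb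

section CommutatorHom

variable (A : Subgroup G) [A.Normal] [IsMulCommutative A] (x : G)

def commutatorHom : A →* G where
  toFun a := ⁅(a : G), x⁆
  map_one' := by simp
  map_mul' a b := by
    have key : ⁅(b : G), x⁆ * (x * (a : G)⁻¹ * x⁻¹) = x * (a : G)⁻¹ * x⁻¹ * ⁅(b : G), x⁆ :=
      setLike_mul_comm (Normal.commutatorElement_mem_left ‹_› b.2 x)
        (Normal.conj_mem ‹_› _ (inv_mem a.2) x)
    simp only [coe_mul, commutatorElement_def] at key ⊢
    calc (a : G) * b * x * ((a : G) * b)⁻¹ * x⁻¹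
        = a * ((b * x * (b : G)⁻¹ * x⁻¹) * (x * (a : G)⁻¹ * x⁻¹)) := by group
      _ = a * ((x * (a : G)⁻¹ * x⁻¹) * (b * x * (b : G)⁻¹ * x⁻¹)) := by rw [key]
      _ = a * x * (a : G)⁻¹ * x⁻¹ * (b * x * (b : G)⁻¹ * x⁻¹) := by group

theorem commutatorHom_apply (a : A) : commutatorHom A x a = ⁅(a : G), x⁆ := rfl

variable {A x} (hx : A ⊔ zpowers x = ⊤)
include hx

theorem ker_commutatorHom : (commutatorHom A x).ker = (center G).subgroupOf A := by
  ext a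
  rw [MonoidHom.mem_ker, mem_subgroupOf, commutatorHom_apply, commutatorElement_eq_one_iff_commute]
  refine ⟨fun hax => ?_, fun ha => (mem_center_iff.mp ha x).symm⟩
  rw [center_eq_iInf (closure_insert_eq_sup_zpowers A x ▸ hx)]
  simp only [Subgroup.mem_iInf]
  intro g hg
  rw [mem_centralizer_singleton_iff]
  rcases Set.mem_insert_iff.mp hg with rfl | hg
  · exact hax.eq
  · exact setLike_mul_comm a.2 hg

theorem normal_range_commutatorHom : (commutatorHom A x).range.Normal := by
  have hrange : (commutatorHom A x).range ≤ A := by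
    rintro _ ⟨a, rfl⟩
    exact Normal.commutatorElement_mem_left ‹_› a.2 x
  rw [← normalizer_eq_top_iff, eq_top_iff, ← hx, sup_le_iff]
  constructor
  · exact (le_centralizer_iff.mp (hrange.trans (le_centralizer A))).trans
      (centralizer_le_normalizer _)
  · rw [le_normalizer_iff]
    rintro g ⟨k, rfl⟩ _ ⟨a, rfl⟩
    refine ⟨⟨x ^ k * a * (x ^ k)⁻¹, Normal.conj_mem ‹_› _ a.2 _⟩, ?_⟩
    rw [commutatorHom_apply, commutatorHom_apply, conjugate_commutatorElement,
      ((Commute.refl x).zpow_left k).eq, mul_inv_cancel_right]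

theorem range_commutatorHom : (commutatorHom A x).range = commutator G := by
  refine le_antisymm ?_ ?_
  · rintro _ ⟨a, rfl⟩
    exact commutator_mem_commutator (mem_top _) (mem_top _)
  · have := normal_range_commutatorHom hx
    refine commutator_le_of_closure_eq_top (closure_insert_eq_sup_zpowers A x ▸ hx) ?_
    rintro a (rfl | ha) b (rfl | hb)
    · rw [commutatorElement_self]; exact one_mem _
    · rw [← commutatorElement_inv]
      exact inv_mem ⟨⟨b, hb⟩, rfl⟩
    · exact ⟨⟨a, ha⟩, rfl⟩
    · rw [commutatorElement_eq_one_iff_mul_comm.mpr (setLike_mul_comm ha hb)]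
      exact one_mem _

theorem card_eq_card_center_mul_card_commutator (hZ : center G ≤ A) :
    Nat.card A = Nat.card (center G) * Nat.card (commutator G) := by
  rw [← card_mul_index (commutatorHom A x).ker, index_ker, range_commutatorHom hx,
    ker_commutatorHom hx, Nat.card_congr (subgroupOfEquivOfLe hZ).toEquiv]

end CommutatorHom

namespace IsPGroup

variable {p : ℕ} [hp : Fact p.Prime] [Finite G] (hG : IsPGroup p G)
include hG

theorem index_eq_of_isCoatom {H : Subgroup G} (hH : IsCoatom H) : H.index = p := by
  obtain ⟨k, hk⟩ := (hG.to_subgroup H).exists_card_eq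
  obtain ⟨j, hj⟩ := hG.index H
  have hj0 : j ≠ 0 := by
    rintro rfl
    exact hH.1 (index_eq_one.mp (by rw [hj, pow_zero]))
  have hcard : Nat.card G = p ^ (k + j) := by rw [← H.card_mul_index, hk, hj, pow_add]
  obtain ⟨K, hK, hHK⟩ := Sylow.exists_subgroup_card_pow_succ
    (hcard ▸ pow_dvd_pow p (by omega : k + 1 ≤ k + j)) hk
  have hHK' : H ≠ K := by
    rintro rfl
    have := Nat.pow_right_injective hp.out.two_le (hk.symm.trans hK)
    omega
  rw [hH.2 K (lt_of_le_of_ne hHK hHK'), card_top, hcard] at hK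
  have hj1 : j = 1 := by
    have := Nat.pow_right_injective hp.out.two_le hK
    omega
  rw [hj, hj1, pow_one]

theorem inf_center_ne_bot {N : Subgroup G} [N.Normal] (hN : N ≠ ⊥) : N ⊓ center G ≠ ⊥ := by
  have : Nontrivial N := (nontrivial_iff_ne_bot N).mpr hN
  obtain ⟨k, hk0, hk⟩ := (hG.to_subgroup N).nontrivial_iff_card.mp this
  have hdvd : p ∣ Nat.card N := hk ▸ dvd_pow_self p hk0.ne'
  -- The fixed points of conjugation on `N` are `N ⊓ center G`, and their number is
  -- `≡ |N| ≡ 0 mod p`, so `1` is not the only one.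
  obtain ⟨b, hb, hb1⟩ := (hG.of_equiv ConjAct.toConjAct)
    |>.exists_fixed_point_of_prime_dvd_card_of_fixed_point N hdvd (a := 1) (fun g => smul_one g)
  refine (ne_bot_iff_exists_ne_one).mpr ⟨⟨b, b.2, mem_center_iff.mpr fun g => ?_⟩, ?_⟩
  · have := congrArg Subtype.val (hb (ConjAct.toConjAct g))
    rw [ConjAct.Subgroup.val_conj_smul, ConjAct.toConjAct_smul] at this
    rw [← mul_inv_eq_iff_eq_mul, this]
  · exact fun h => hb1 (Subtype.ext (congrArg Subtype.val h).symm)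

theorem card_center_eq_of_index_commutator (hG' : (commutator G).index = p ^ 2)
    {A : Subgroup G} [IsMulCommutative A] (hA : A.index = p) (hne : commutator G ≠ ⊥) :
    Nat.card (center G) = p := by
  have hAc : IsCoatom A := isCoatom_of_index_prime (hA ▸ hp.out)
  have : Group.IsNilpotent G := hG.isNilpotent
  have : A.Normal := Group.normalizerCondition_of_isNilpotent.normal_of_coatom A hAc
  obtain ⟨x, hx⟩ : ∃ x, x ∉ A := SetLike.exists_not_mem_of_ne_top A hAc.1 rfl
  have hAZ := card_eq_card_center_mul_card_commutator (hAc.sup_zpowers_eq_top hx)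
    (center_le_of_isCoatom hAc hne)
  have hG'pos : 0 < Nat.card (commutator G) := Nat.card_pos
  have h := (commutator G).card_mul_index
  rw [← A.card_mul_index, hAZ, hA, hG'] at h
  refine Nat.eq_of_mul_eq_mul_left (Nat.mul_pos hG'pos hp.out.pos) ?_
  linarith

theorem center_le_commutator (hZ : Nat.card (center G) = p) (hne : commutator G ≠ ⊥) :
    center G ≤ commutator G :=
  le_of_inf_ne_bot_of_card_prime (hZ ▸ hp.out) (hG.inf_center_ne_bot hne)

theorem nilpotencyClass_eq_of_index_commutator {n : ℕ} (hcard : Nat.card G = p ^ n)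
    (hG' : (commutator G).index = p ^ 2) {A : Subgroup G} [IsMulCommutative A]
    (hA : A.index = p) : Group.nilpotencyClass G = n - 1 := by
  induction n using Nat.strong_induction_on generalizing G with
  | _ n ih =>
  have : Group.IsNilpotent G := hG.isNilpotent
  have hn : 2 ≤ n :=
    (Nat.pow_dvd_pow_iff_le_right hp.out.one_lt).mp (hG' ▸ hcard ▸ index_dvd_card _)
  have : Nontrivial G := Finite.one_lt_card_iff_nontrivial.mp
    (hcard ▸ Nat.one_lt_pow (by omega) hp.out.one_lt)
  by_cases hab : commutator G = ⊥
  · have hn2 : n = 2 := by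
      rw [hab, index_bot, hcard] at hG'
      exact Nat.pow_right_injective hp.out.two_le hG'
    have h1 : Group.nilpotencyClass G ≤ 1 :=
      Group.IsNilpotent.nilpotencyClass_le_one_iff.mpr ((_root_.commutator_eq_bot_iff G).mp hab)
    have h0 : Group.nilpotencyClass G ≠ 0 := by
      rw [Ne, Group.nilpotencyClass_zero_iff_subsingleton]
      exact not_subsingleton G
    omega
  · have hZ := hG.card_center_eq_of_index_commutator hG' hA hab
    have hZG' := hG.center_le_commutator hZ hab
    set π := QuotientGroup.mk' (center G)
    have hπ : Function.Surjective π := QuotientGroup.mk'_surjective _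
    have hker : π.ker = center G := QuotientGroup.ker_mk' _
    have hQcard : Nat.card (G ⧸ center G) = p ^ (n - 1) := by
      have := card_eq_card_quotient_mul_card_subgroup (center G)
      rw [hcard, hZ, ← pow_sub_mul_pow p (by omega : 1 ≤ n), pow_one] at this
      exact (Nat.eq_of_mul_eq_mul_right hp.out.pos this).symm
    have hQ' : (commutator (G ⧸ center G)).index = p ^ 2 := by
      rw [← map_commutator_of_surjective hπ, index_map_eq _ hπ (hker.trans_le hZG'), hG']
    have hZA := center_le_of_isCoatom (isCoatom_of_index_prime (hA ▸ hp.out)) hab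
    have hQA : (A.map π).index = p := by rw [index_map_eq _ hπ (hker.trans_le hZA), hA]
    rw [Group.nilpotencyClass_eq_quotient_center_plus_one,
      ih (n - 1) (by omega) (hG.to_quotient _) hQcard hQ' hQA]
    omega

end IsPGroup

end

theorem stmt_17_general {p n : ℕ} (hp : p.Prime) (S : Type*) [Group S] [Finite S]
    (hS : IsPGroup p S) (hcard : Nat.card S = p ^ n)
    (hcomm : commutator S = frattini S) (hΦ : (frattini S).index = p ^ 2)
    (hM : ∃ M : Subgroup S, IsCoatom M ∧ ∀ a ∈ M, ∀ b ∈ M, a * b = b * a) :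
    Group.nilpotencyClass S = n - 1 := by
  have : Fact p.Prime := ⟨hp⟩
  obtain ⟨M, hM, hMcomm⟩ := hM
  have : IsMulCommutative M := ⟨⟨fun a b => Subtype.ext (hMcomm _ a.2 _ b.2)⟩⟩
  exact hS.nilpotencyClass_eq_of_index_commutator hcard (hcomm ▸ hΦ) (hS.index_eq_of_isCoatom hM)

theorem stmt_17 {p n : ℕ} (hp : p.Prime) (hn : 3 ≤ n) (S : Type*) [Group S] [Finite S]
    (hS : IsPGroup p S) (hcard : Nat.card S = p ^ n)
    (hcomm : commutator S = frattini S) (hΦ : (frattini S).index = p ^ 2)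
    (hM : ∃ M : Subgroup S, IsCoatom M ∧ ∀ a ∈ M, ∀ b ∈ M, a * b = b * a) :
    Group.nilpotencyClass S = n - 1 :=
  stmt_17_general hp S hS hcard hcomm hΦ hM
end
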